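/- (Two-margin closed form, even case.) With two alternating partitions A,B (A^{(2m+1)} = A, A^{(2m)} = B) and the recursion G^{(N)}(f) = G^{(N-1)}(f) − Σ_j E(f|C_j^{(N)})G^{(N-1)}(C_j^{(N)}) started from a linear process G, one has for all m ≥ 0: G^{(2m)}(f) = G(f) − (S_{1,even}^{(m−1)}(f))ᵗ·G[A] − (S_{2,even}^{(m−2)}(f))ᵗ·G[B], where S_{1,even}^{(N)}(f) = Σ_{k=0}^{N}(P_{B|A}P_{A|B})^k (E[f|A] − P_{B|A}E[f|B]), S_{2,odd}^{(N)}(f) = Σ_{k=0}^{N}(P_{A|B}P_{B|A})^k (E[f|B] − P_{A|B}E[f|A]), S_{2,even}^{(N)}(f) = S_{2,odd}^{(N)}(f) + (P_{A|B}P_{B|A})^{N+1} E[f|B], with the convention that sums with negative upper index are zero and matrices with negative power are the zero matrix. -/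

import Mathlib

open MeasureTheory

noncomputable section

variable {𝒳 : Type*} [MeasurableSpace 𝒳]

/-- The conditional probability matrix `P_{B|A}`, `(P_{B|A})_{ij} = P(Bj|Ai)`. -/
def condMat (P : Measure 𝒳) {m₁ m₂ : ℕ} (A : Fin m₁ → Set 𝒳) (B : Fin m₂ → Set 𝒳) :
    Matrix (Fin m₁) (Fin m₂) ℝ :=
  Matrix.of fun i j => (P (B j ∩ A i)).toReal / (P (A i)).toReal

/-- The conditional expectation vector `E[f|A]`. -/
def condExpVec (P : Measure 𝒳) {m₁ : ℕ} (A : Fin m₁ → Set 𝒳) (f : 𝒳 → ℝ) :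
    Fin m₁ → ℝ :=
  fun i => (∫ x in A i, f x ∂P) / (P (A i)).toReal

/-- Matrix power with integer exponent, with the convention that a matrix raised to a
negative power is the zero matrix. -/
def mpowz {n : ℕ} (M : Matrix (Fin n) (Fin n) ℝ) (z : ℤ) : Matrix (Fin n) (Fin n) ℝ :=
  if z < 0 then 0 else M ^ z.toNat

/-- `S_{1,even}^{(N)}(f) = Σ_{k=0}^{N} (P_{B|A}P_{A|B})^k (E[f|A] − P_{B|A}E[f|B])`; a sum
with negative upper index is null. -/
def S1even (P : Measure 𝒳) {m₁ m₂ : ℕ} (A : Fin m₁ → Set 𝒳) (B : Fin m₂ → Set 𝒳)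
    (f : 𝒳 → ℝ) (N : ℤ) : Fin m₁ → ℝ :=
  ∑ k ∈ Finset.range (N + 1).toNat,
    ((condMat P A B * condMat P B A) ^ k).mulVec
      (condExpVec P A f - (condMat P A B).mulVec (condExpVec P B f))

/-- `S_{2,odd}^{(N)}(f) = Σ_{k=0}^{N} (P_{A|B}P_{B|A})^k (E[f|B] − P_{A|B}E[f|A])`. -/
def S2odd (P : Measure 𝒳) {m₁ m₂ : ℕ} (A : Fin m₁ → Set 𝒳) (B : Fin m₂ → Set 𝒳)
    (f : 𝒳 → ℝ) (N : ℤ) : Fin m₂ → ℝ :=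
  ∑ k ∈ Finset.range (N + 1).toNat,
    ((condMat P B A * condMat P A B) ^ k).mulVec
      (condExpVec P B f - (condMat P B A).mulVec (condExpVec P A f))

/-- `S_{2,even}^{(N)}(f) = S_{2,odd}^{(N)}(f) + (P_{A|B}P_{B|A})^{N+1} E[f|B]`. -/
def S2even (P : Measure 𝒳) {m₁ m₂ : ℕ} (A : Fin m₁ → Set 𝒳) (B : Fin m₂ → Set 𝒳)
    (f : 𝒳 → ℝ) (N : ℤ) : Fin m₂ → ℝ :=
  S2odd P A B f N + (mpowz (condMat P B A * condMat P A B) (N + 1)).mulVec (condExpVec P B f)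

/-- The raking recursion with the two alternating partitions `A^{(2m+1)} = A`,
`A^{(2m)} = B`: step `N+1` uses `A` if `N+1` is odd and `B` if `N+1` is even. -/
def rake2 (P : Measure 𝒳) {m₁ m₂ : ℕ} (A : Fin m₁ → Set 𝒳) (B : Fin m₂ → Set 𝒳)
    (G : (𝒳 → ℝ) → ℝ) : ℕ → (𝒳 → ℝ) → ℝ
  | 0 => G
  | N + 1 => fun f =>
      rake2 P A B G N f -
        if (N + 1) % 2 = 1 then
          ∑ j : Fin m₁, ((∫ x in A j, f x ∂P) / (P (A j)).toReal) *
            rake2 P A B G N ((A j).indicator (1 : 𝒳 → ℝ))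
        else
          ∑ j : Fin m₂, ((∫ x in B j, f x ∂P) / (P (B j)).toReal) *
            rake2 P A B G N ((B j).indicator (1 : 𝒳 → ℝ))

/-!
Every iterate `G^{(N)}` has the shape
`g ↦ G g − (X E[g|A] + Y E[g|B])ᵗ G[A] − (Z E[g|A] + W E[g|B])ᵗ G[B]`
for four matrices `X, Y, Z, W`. Since `E[1_{A_j}|A] = e_j` and `E[1_{A_j}|B]` is the `j`-th
column of `P_{A|B}`, a raking step along `A` replaces `(X, Y, Z, W)` by
`(1 − Y P_{A|B}, Y, −W P_{A|B}, W)`, and symmetrically for `B`. Starting from `(0, 0, 0, 0)`, a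
double step `A` then `B` turns the geometric sums `Σ_{k<m} (P_{B|A} P_{A|B})^k` and
`Σ_{k<m} (P_{A|B} P_{B|A})^k` into the same sums up to `m + 1`; reading off the coefficients
at `N = 2m` gives `S_{1,even}^{(m−1)}` and `S_{2,even}^{(m−2)}`.
-/

open Matrix

theorem geom_sum_succ_eq_one_add_mul {R : Type*} [Semiring R] (x : R) (n : ℕ) :
    ∑ i ∈ Finset.range (n + 1), x ^ i = 1 + (∑ i ∈ Finset.range n, x ^ i) * x := by
  rw [geom_sum_succ, (Commute.sum_right _ _ _ fun i _ => Commute.self_pow x i).eq, add_comm]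

/-- `G[C]` in the paper's notation. -/
def cellValues {n : ℕ} (G : (𝒳 → ℝ) → ℝ) (C : Fin n → Set 𝒳) : Fin n → ℝ :=
  fun i => G ((C i).indicator 1)

section Partition

variable (P : Measure 𝒳) {n₁ n₂ : ℕ} (C : Fin n₁ → Set 𝒳) (D : Fin n₂ → Set 𝒳)

def rakeStep (F : (𝒳 → ℝ) → ℝ) : (𝒳 → ℝ) → ℝ :=
  fun g => F g - condExpVec P C g ⬝ᵥ cellValues F C

def rakeForm (G : (𝒳 → ℝ) → ℝ) (X : Matrix (Fin n₁) (Fin n₁) ℝ) (Y : Matrix (Fin n₁) (Fin n₂) ℝ)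
    (Z : Matrix (Fin n₂) (Fin n₁) ℝ) (W : Matrix (Fin n₂) (Fin n₂) ℝ) : (𝒳 → ℝ) → ℝ :=
  fun g => G g
    - (X *ᵥ condExpVec P C g + Y *ᵥ condExpVec P D g) ⬝ᵥ cellValues G C
    - (Z *ᵥ condExpVec P C g + W *ᵥ condExpVec P D g) ⬝ᵥ cellValues G D

theorem rakeForm_swap (G : (𝒳 → ℝ) → ℝ) (X : Matrix (Fin n₁) (Fin n₁) ℝ)
    (Y : Matrix (Fin n₁) (Fin n₂) ℝ) (Z : Matrix (Fin n₂) (Fin n₁) ℝ)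
    (W : Matrix (Fin n₂) (Fin n₂) ℝ) :
    rakeForm P C D G X Y Z W = rakeForm P D C G W Z Y X := by
  funext g
  simp only [rakeForm, add_dotProduct]
  ring

theorem condExpVec_indicator (hD : ∀ j, MeasurableSet (D j)) (j : Fin n₂) :
    condExpVec P C ((D j).indicator 1) = condMat P C D *ᵥ Pi.single j 1 := by
  funext i
  rw [mulVec_single_one, condExpVec, integral_indicator_one (hD j), measureReal_def,
    Measure.restrict_apply (hD j)]
  rfl

theorem condMat_self [IsFiniteMeasure P] (hdisj : ∀ i j, i ≠ j → Disjoint (C i) (C j))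
    (hpos : ∀ i, 0 < P (C i)) : condMat P C C = 1 := by
  ext i j
  rw [condMat, of_apply, one_apply]
  split_ifs with hij
  · subst hij
    rw [Set.inter_self]
    exact div_self (ENNReal.toReal_pos (hpos i).ne' (measure_ne_top P _)).ne'
  · rw [(hdisj j i (Ne.symm hij)).inter_eq]
    simp

theorem rakeStep_rakeForm (hC : ∀ j, MeasurableSet (C j)) (hCC : condMat P C C = 1)
    (G : (𝒳 → ℝ) → ℝ) (X : Matrix (Fin n₁) (Fin n₁) ℝ) (Y : Matrix (Fin n₁) (Fin n₂) ℝ)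
    (Z : Matrix (Fin n₂) (Fin n₁) ℝ) (W : Matrix (Fin n₂) (Fin n₂) ℝ) :
    rakeStep P C (rakeForm P C D G X Y Z W)
      = rakeForm P C D G (1 - Y * condMat P D C) Y (-(W * condMat P D C)) W := by
  have hcells : cellValues (rakeForm P C D G X Y Z W) C = cellValues G C
      - cellValues G C ᵥ* (X + Y * condMat P D C) - cellValues G D ᵥ* (Z + W * condMat P D C) := by
    funext j
    simp only [cellValues, rakeForm, condExpVec_indicator P _ _ hC, hCC, one_mulVec,
      mulVec_mulVec, ← add_mulVec, Pi.sub_apply]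
    rw [dotProduct_comm _ (cellValues G C), dotProduct_comm _ (cellValues G D),
      dotProduct_mulVec, dotProduct_mulVec, dotProduct_single_one, dotProduct_single_one]
  have hdot {n : ℕ} (M : Matrix (Fin n) (Fin n₁) ℝ) (u : Fin n → ℝ) (a : Fin n₁ → ℝ) :
      a ⬝ᵥ (u ᵥ* M) = (M *ᵥ a) ⬝ᵥ u := by
    rw [dotProduct_comm, ← dotProduct_mulVec, dotProduct_comm]
  funext g
  simp only [rakeStep, rakeForm, hcells, dotProduct_sub, hdot, add_mulVec, sub_mulVec,
    neg_mulVec, one_mulVec, ← mulVec_mulVec, add_dotProduct, sub_dotProduct, neg_dotProduct]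
  ring

end Partition

section TwoMargins

variable (P : Measure 𝒳) {m₁ m₂ : ℕ} (A : Fin m₁ → Set 𝒳) (B : Fin m₂ → Set 𝒳)

theorem rake2_two_mul_add_one (G : (𝒳 → ℝ) → ℝ) (m : ℕ) :
    rake2 P A B G (2 * m + 1) = rakeStep P A (rake2 P A B G (2 * m)) := by
  funext g
  rw [rake2]
  beta_reduce
  rw [if_pos (by omega)]
  rfl

theorem rake2_two_mul_add_two (G : (𝒳 → ℝ) → ℝ) (m : ℕ) :
    rake2 P A B G (2 * m + 2) = rakeStep P B (rake2 P A B G (2 * m + 1)) := by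
  funext g
  rw [rake2]
  beta_reduce
  rw [if_neg (by omega)]
  rfl

theorem rake2_two_mul (hAmeas : ∀ i, MeasurableSet (A i)) (hBmeas : ∀ j, MeasurableSet (B j))
    (hAA : condMat P A A = 1) (hBB : condMat P B B = 1) (G : (𝒳 → ℝ) → ℝ) (m : ℕ) :
    rake2 P A B G (2 * m) = rakeForm P A B G
      (∑ k ∈ Finset.range m, (condMat P A B * condMat P B A) ^ k)
      (-((∑ k ∈ Finset.range m, (condMat P A B * condMat P B A) ^ k) * condMat P A B))
      (-((∑ k ∈ Finset.range (m - 1), (condMat P B A * condMat P A B) ^ k) * condMat P B A))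
      (∑ k ∈ Finset.range m, (condMat P B A * condMat P A B) ^ k) := by
  induction m with
  | zero =>
    funext g
    simp [rake2, rakeForm]
  | succ m ih =>
    rw [Nat.mul_succ, rake2_two_mul_add_two, rake2_two_mul_add_one, ih,
      rakeStep_rakeForm P A B hAmeas hAA, rakeForm_swap, rakeStep_rakeForm P B A hBmeas hBB,
      rakeForm_swap, Nat.add_sub_cancel]
    simp only [Matrix.neg_mul, sub_neg_eq_add, Matrix.mul_assoc, ← geom_sum_succ_eq_one_add_mul]

theorem S1even_natCast_sub_one (f : 𝒳 → ℝ) (m : ℕ) :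
    S1even P A B f (m - 1) = (∑ k ∈ Finset.range m, (condMat P A B * condMat P B A) ^ k)
      *ᵥ (condExpVec P A f - condMat P A B *ᵥ condExpVec P B f) := by
  rw [S1even, show ((m : ℤ) - 1 + 1).toNat = m by omega, sum_mulVec]

theorem S2even_natCast_sub_two (f : 𝒳 → ℝ) (m : ℕ) :
    S2even P A B f (m - 2)
      = (∑ k ∈ Finset.range m, (condMat P B A * condMat P A B) ^ k) *ᵥ condExpVec P B f
        - (∑ k ∈ Finset.range (m - 1), (condMat P B A * condMat P A B) ^ k)
          *ᵥ (condMat P B A *ᵥ condExpVec P A f) := by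
  cases m with
  | zero => simp [S2even, S2odd, mpowz]
  | succ n =>
    rw [S2even, S2odd, mpowz, if_neg (by omega), show ((n + 1 : ℕ) - 2 + 1 : ℤ).toNat = n by omega,
      Nat.add_sub_cancel, Finset.sum_range_succ, add_mulVec, ← sum_mulVec, mulVec_sub]
    abel

end TwoMargins

theorem rake2_even_closed_form_general
    (P : Measure 𝒳) [IsProbabilityMeasure P]
    {m₁ m₂ : ℕ} (A : Fin m₁ → Set 𝒳) (B : Fin m₂ → Set 𝒳)
    (hAmeas : ∀ i, MeasurableSet (A i)) (hBmeas : ∀ j, MeasurableSet (B j))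
    (hAdisj : ∀ i j, i ≠ j → Disjoint (A i) (A j))
    (hBdisj : ∀ i j, i ≠ j → Disjoint (B i) (B j))
    (hA : ∀ i, 0 < P (A i)) (hB : ∀ j, 0 < P (B j))
    (G : (𝒳 → ℝ) → ℝ)
    (f : 𝒳 → ℝ)
    (m : ℕ) :
    rake2 P A B G (2 * m) f
      = G f
        - ∑ i : Fin m₁, S1even P A B f ((m : ℤ) - 1) i * G ((A i).indicator (1 : 𝒳 → ℝ))
        - ∑ j : Fin m₂, S2even P A B f ((m : ℤ) - 2) j * G ((B j).indicator (1 : 𝒳 → ℝ)) := by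
  rw [rake2_two_mul P A B hAmeas hBmeas (condMat_self P A hAdisj hA) (condMat_self P B hBdisj hB),
    S1even_natCast_sub_one, S2even_natCast_sub_two]
  simp only [rakeForm, neg_mulVec, ← mulVec_mulVec, mulVec_sub, ← sub_eq_add_neg, neg_add_eq_sub]
  rfl

/-- Two-margin closed form, even case: for all `m ≥ 0`,
`G^{(2m)}(f) = G(f) − (S_{1,even}^{(m−1)}(f))ᵗ·G[A] − (S_{2,even}^{(m−2)}(f))ᵗ·G[B]`. -/
theorem rake2_even_closed_form
    (P : Measure 𝒳) [IsProbabilityMeasure P]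
    {m₁ m₂ : ℕ} (A : Fin m₁ → Set 𝒳) (B : Fin m₂ → Set 𝒳)
    (hAmeas : ∀ i, MeasurableSet (A i)) (hBmeas : ∀ j, MeasurableSet (B j))
    (hAdisj : ∀ i j, i ≠ j → Disjoint (A i) (A j))
    (hBdisj : ∀ i j, i ≠ j → Disjoint (B i) (B j))
    (hAcov : (⋃ i, A i) = Set.univ) (hBcov : (⋃ j, B j) = Set.univ)
    (hA : ∀ i, 0 < P (A i)) (hB : ∀ j, 0 < P (B j))
    (G : (𝒳 → ℝ) → ℝ)
    (hGadd : ∀ f g : 𝒳 → ℝ, G (f + g) = G f + G g)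
    (hGsmul : ∀ (c : ℝ) (f : 𝒳 → ℝ), G (c • f) = c * G f)
    (f : 𝒳 → ℝ) (hmf : Measurable f) (M : ℝ) (hbd : ∀ x, |f x| ≤ M)
    (m : ℕ) :
    rake2 P A B G (2 * m) f
      = G f
        - ∑ i : Fin m₁, S1even P A B f ((m : ℤ) - 1) i * G ((A i).indicator (1 : 𝒳 → ℝ))
        - ∑ j : Fin m₂, S2even P A B f ((m : ℤ) - 2) j * G ((B j).indicator (1 : 𝒳 → ℝ)) :=
  rake2_even_closed_form_general P A B hAmeas hBmeas hAdisj hBdisj hA hB G f m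

end
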